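/- The two sets of product vectors in ℂ²⊗ℂ²⊗ℂ³ given in Eq. (9) and Eq. (10) span the same 8-dimensional subspace; consequently they determine the same complementary 4-dimensional subspace and the same edge state (normalized projector onto the complement). -/

import Mathlib

noncomputable section

def e {n : ℕ} (i : Fin n) : EuclideanSpace ℂ (Fin n) := EuclideanSpace.single i 1

def tp {m n : ℕ} (a : EuclideanSpace ℂ (Fin m)) (b : EuclideanSpace ℂ (Fin n)) :
    EuclideanSpace ℂ (Fin m × Fin n) := WithLp.toLp 2 (fun p : Fin m × Fin n => a p.1 * b p.2)

def tp3 {l m n : ℕ} (a : EuclideanSpace ℂ (Fin l)) (b : EuclideanSpace ℂ (Fin m))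
    (c : EuclideanSpace ℂ (Fin n)) : EuclideanSpace ℂ (Fin l × Fin m × Fin n) :=
  WithLp.toLp 2 (fun p : Fin l × Fin m × Fin n => a p.1 * b p.2.1 * c p.2.2)

def F : Fin 8 → EuclideanSpace ℂ (Fin 2 × Fin 2 × Fin 3) :=
  ![tp3 (e 0) (e 1) (e 0 - e 1), tp3 (e 1) (e 0 - e 1) (e 0), tp3 (e 0 - e 1) (e 0) (e 1),
    tp3 (e 0) (e 0 + e 1) (e 2), tp3 (e 0) (e 0 - e 1) (e 2), tp3 (e 1) (e 0 + e 1) (e 2),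
    tp3 (e 1) (e 0 - e 1) (e 2), tp3 (e 0 + e 1) (e 0 + e 1) (e 0 + e 1)]

def G : Fin 8 → EuclideanSpace ℂ (Fin 2 × Fin 2 × Fin 3) :=
  ![tp3 (e 0) (e 1) (e 0 - e 1), tp3 (e 1) (e 0 - e 1) (e 0 + e 2),
    tp3 (e 1) (e 0 - e 1) (e 0 - e 2), tp3 (e 0 - e 1) (e 0) (e 1),
    tp3 (e 0) (e 0 + e 1) (e 2), tp3 (e 0) (e 0 - e 1) (e 2),
    tp3 (e 1) (e 0 + e 1) (e 2), tp3 (e 0 + e 1) (e 0 + e 1) (e 0 + e 1)]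

lemma e_apply {n : ℕ} (i j : Fin n) : e i j = if j = i then 1 else 0 :=
  EuclideanSpace.single_apply i 1 j

lemma hF0 : F 0 = tp3 (e 0) (e 1) (e 0 - e 1) := rfl
lemma hF1 : F 1 = tp3 (e 1) (e 0 - e 1) (e 0) := rfl
lemma hF2 : F 2 = tp3 (e 0 - e 1) (e 0) (e 1) := rfl
lemma hF3 : F 3 = tp3 (e 0) (e 0 + e 1) (e 2) := rfl
lemma hF4 : F 4 = tp3 (e 0) (e 0 - e 1) (e 2) := rfl
lemma hF5 : F 5 = tp3 (e 1) (e 0 + e 1) (e 2) := rfl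
lemma hF6 : F 6 = tp3 (e 1) (e 0 - e 1) (e 2) := rfl
lemma hF7 : F 7 = tp3 (e 0 + e 1) (e 0 + e 1) (e 0 + e 1) := rfl

lemma hG0 : G 0 = tp3 (e 0) (e 1) (e 0 - e 1) := rfl
lemma hG1 : G 1 = tp3 (e 1) (e 0 - e 1) (e 0 + e 2) := rfl
lemma hG2 : G 2 = tp3 (e 1) (e 0 - e 1) (e 0 - e 2) := rfl
lemma hG3 : G 3 = tp3 (e 0 - e 1) (e 0) (e 1) := rfl
lemma hG4 : G 4 = tp3 (e 0) (e 0 + e 1) (e 2) := rfl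
lemma hG5 : G 5 = tp3 (e 0) (e 0 - e 1) (e 2) := rfl
lemma hG6 : G 6 = tp3 (e 1) (e 0 + e 1) (e 2) := rfl
lemma hG7 : G 7 = tp3 (e 0 + e 1) (e 0 + e 1) (e 0 + e 1) := rfl

lemma g1 : G 1 = F 1 + F 6 := by
  rw [hG1, hF1, hF6]
  ext p
  simp only [tp3, PiLp.add_apply, PiLp.sub_apply, PiLp.toLp_apply]
  ring

lemma g2 : G 2 = F 1 - F 6 := by
  rw [hG2, hF1, hF6]
  ext p
  simp only [tp3, PiLp.add_apply, PiLp.sub_apply, PiLp.toLp_apply]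
  ring

lemma f1 : F 1 = (2:ℂ)⁻¹ • (G 1 + G 2) := by
  rw [g1, g2]; module

lemma f6 : F 6 = (2:ℂ)⁻¹ • (G 1 - G 2) := by
  rw [g1, g2]; module

lemma hspan : Submodule.span ℂ (Set.range G) = Submodule.span ℂ (Set.range F) := by
  have sF : ∀ j : Fin 8, F j ∈ Submodule.span ℂ (Set.range F) :=
    fun j => Submodule.subset_span ⟨j, rfl⟩
  have sG : ∀ j : Fin 8, G j ∈ Submodule.span ℂ (Set.range G) :=
    fun j => Submodule.subset_span ⟨j, rfl⟩
  apply le_antisymm <;> rw [Submodule.span_le, Set.range_subset_iff] <;> intro i <;> fin_cases i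
  · show G 0 ∈ (Submodule.span ℂ (Set.range F) : Set _)
    rw [hG0, ← hF0]; exact sF 0
  · show G 1 ∈ (Submodule.span ℂ (Set.range F) : Set _)
    rw [g1]; exact add_mem (sF 1) (sF 6)
  · show G 2 ∈ (Submodule.span ℂ (Set.range F) : Set _)
    rw [g2]; exact sub_mem (sF 1) (sF 6)
  · show G 3 ∈ (Submodule.span ℂ (Set.range F) : Set _)
    rw [hG3, ← hF2]; exact sF 2
  · show G 4 ∈ (Submodule.span ℂ (Set.range F) : Set _)
    rw [hG4, ← hF3]; exact sF 3
  · show G 5 ∈ (Submodule.span ℂ (Set.range F) : Set _)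
    rw [hG5, ← hF4]; exact sF 4
  · show G 6 ∈ (Submodule.span ℂ (Set.range F) : Set _)
    rw [hG6, ← hF5]; exact sF 5
  · show G 7 ∈ (Submodule.span ℂ (Set.range F) : Set _)
    rw [hG7, ← hF7]; exact sF 7
  · show F 0 ∈ (Submodule.span ℂ (Set.range G) : Set _)
    rw [hF0, ← hG0]; exact sG 0
  · show F 1 ∈ (Submodule.span ℂ (Set.range G) : Set _)
    rw [f1]; exact Submodule.smul_mem _ _ (add_mem (sG 1) (sG 2))
  · show F 2 ∈ (Submodule.span ℂ (Set.range G) : Set _)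
    rw [hF2, ← hG3]; exact sG 3
  · show F 3 ∈ (Submodule.span ℂ (Set.range G) : Set _)
    rw [hF3, ← hG4]; exact sG 4
  · show F 4 ∈ (Submodule.span ℂ (Set.range G) : Set _)
    rw [hF4, ← hG5]; exact sG 5
  · show F 5 ∈ (Submodule.span ℂ (Set.range G) : Set _)
    rw [hF5, ← hG6]; exact sG 6
  · show F 6 ∈ (Submodule.span ℂ (Set.range G) : Set _)
    rw [f6]; exact Submodule.smul_mem _ _ (sub_mem (sG 1) (sG 2))
  · show F 7 ∈ (Submodule.span ℂ (Set.range G) : Set _)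
    rw [hF7, ← hG7]; exact sG 7

lemma hli : LinearIndependent ℂ F := by
  rw [Fintype.linearIndependent_iff]
  intro g hg
  have hp : ∀ p : Fin 2 × Fin 2 × Fin 3,
      g 0 * tp3 (e 0) (e 1) (e 0 - e 1) p + g 1 * tp3 (e 1) (e 0 - e 1) (e 0) p
      + g 2 * tp3 (e 0 - e 1) (e 0) (e 1) p + g 3 * tp3 (e 0) (e 0 + e 1) (e 2) p
      + g 4 * tp3 (e 0) (e 0 - e 1) (e 2) p + g 5 * tp3 (e 1) (e 0 + e 1) (e 2) p
      + g 6 * tp3 (e 1) (e 0 - e 1) (e 2) p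
      + g 7 * tp3 (e 0 + e 1) (e 0 + e 1) (e 0 + e 1) p = 0 := by
    intro p
    have h := congrArg (fun v => v p) hg
    rw [Fin.sum_univ_eight, hF0, hF1, hF2, hF3, hF4, hF5, hF6, hF7] at h
    simpa [PiLp.add_apply, PiLp.smul_apply, smul_eq_mul] using h
  have h010 := hp (0, 1, 0)
  have h011 := hp (0, 1, 1)
  have h100 := hp (1, 0, 0)
  have h001 := hp (0, 0, 1)
  have h002 := hp (0, 0, 2)
  have h012 := hp (0, 1, 2)
  have h102 := hp (1, 0, 2)
  have h112 := hp (1, 1, 2)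
  simp only [tp3, PiLp.add_apply, PiLp.sub_apply, PiLp.toLp_apply, e_apply, Fin.reduceEq, reduceIte, if_true,
    if_false] at h010 h011 h100 h001 h002 h012 h102 h112
  norm_num at h010 h011 h100 h001 h002 h012 h102 h112
  intro i
  fin_cases i
  · show g 0 = 0; linear_combination (h010 - h011) / 2
  · show g 1 = 0; linear_combination h100 - (h010 + h011) / 2
  · show g 2 = 0; linear_combination h001 - (h010 + h011) / 2
  · show g 3 = 0; linear_combination (h002 + h012) / 2
  · show g 4 = 0; linear_combination (h002 - h012) / 2
  · show g 5 = 0; linear_combination (h102 + h112) / 2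
  · show g 6 = 0; linear_combination (h102 - h112) / 2
  · show g 7 = 0; linear_combination (h010 + h011) / 2

theorem eq9_eq10_same_span :
    Submodule.span ℂ (Set.range G) = Submodule.span ℂ (Set.range F) ∧
    Module.finrank ℂ (Submodule.span ℂ (Set.range F) :
        Submodule ℂ (EuclideanSpace ℂ (Fin 2 × Fin 2 × Fin 3))) = 8 ∧
    (Submodule.span ℂ (Set.range G))ᗮ = (Submodule.span ℂ (Set.range F))ᗮ := by
  refine ⟨hspan, ?_, by rw [hspan]⟩
  rw [finrank_span_eq_card hli]
  simp
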